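/- arXiv:2112.03459 — 5 statements merged into one kernel-verified Lean document; each statement's English description precedes it below -/
import Mathlib

section
/- Let F : ℝ^d → ℝ be differentiable with L_F-Lipschitz gradient. Let η > 0, c_l, c_u with 0 < c_l ≤ c_u, and let η̃ ∈ ℝ^d be a vector with η·c_l ≤ η̃_i ≤ η·c_u for all i. Suppose η·L_F ≤ c_l/(2c_u²). Then for any x, v ∈ ℝ^d, setting x' = x − η̃ ∘ v (element-wise product), we have F(x') ≤ F(x) + (η c_u/2)·‖∇F(x) − v‖² − (η c_l/2)·‖∇F(x)‖² − (η c_l/4)·‖v‖². -/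
open scoped BigOperators

/-- Element-wise (Hadamard) product on `EuclideanSpace ℝ (Fin d)`. -/
def hadamard {d : ℕ} (a b : EuclideanSpace ℝ (Fin d)) : EuclideanSpace ℝ (Fin d) :=
  WithLp.toLp 2 (fun i => a i * b i)
section aux
open intervalIntegral

lemma stmt_0_descent_aux {E : Type*} [NormedAddCommGroup E] [InnerProductSpace ℝ E]
    [CompleteSpace E]
    (F : E → ℝ) (gradF : E → E) (L : ℝ) (hL : 0 ≤ L)
    (hgrad : ∀ x, HasGradientAt F (gradF x) x)
    (hLip : ∀ a b, ‖gradF a - gradF b‖ ≤ L * ‖a - b‖) (x y : E) :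
    F y ≤ F x + inner ℝ (gradF x) (y - x) + L / 2 * ‖y - x‖ ^ 2 := by
  set u := y - x with hu
  have hgc : Continuous gradF := by
    apply (LipschitzWith.of_dist_le_mul (K := L.toNNReal) ?_).continuous
    intro a b
    simpa [dist_eq_norm, Real.coe_toNNReal _ hL] using hLip a b
  have hderiv : ∀ t : ℝ, HasDerivAt (fun t : ℝ => F (x + t • u))
      (inner ℝ (gradF (x + t • u)) u : ℝ) t := by
    intro t
    have h1 : HasDerivAt (fun t : ℝ => x + t • u) u t := by
      simpa using ((hasDerivAt_id t).smul_const u).const_add x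
    have h2 := ((hgrad (x + t • u)).hasFDerivAt).comp_hasDerivAt t h1
    simp [InnerProductSpace.toDual_apply_apply] at h2
    exact h2
  have hcont : Continuous fun t : ℝ => (inner ℝ (gradF (x + t • u)) u : ℝ) := by
    exact (Continuous.inner (hgc.comp (by continuity)) continuous_const)
  have hFTC : F (x + (1:ℝ) • u) - F (x + (0:ℝ) • u)
      = ∫ t in (0:ℝ)..1, (inner ℝ (gradF (x + t • u)) u : ℝ) := by
    refine (intervalIntegral.integral_eq_sub_of_hasDerivAt (fun t _ => hderiv t) ?_).symm
    exact hcont.intervalIntegrable 0 1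
  have hbound : ∀ t ∈ Set.Icc (0:ℝ) 1,
      (inner ℝ (gradF (x + t • u)) u : ℝ) ≤ inner ℝ (gradF x) u + L * t * ‖u‖ ^ 2 := by
    intro t ht
    have h3 : (inner ℝ (gradF (x + t • u)) u : ℝ) - inner ℝ (gradF x) u
        = inner ℝ (gradF (x + t • u) - gradF x) u := by
      rw [inner_sub_left]
    have h4 : (inner ℝ (gradF (x + t • u) - gradF x) u : ℝ)
        ≤ ‖gradF (x + t • u) - gradF x‖ * ‖u‖ := real_inner_le_norm _ _
    have h5 : ‖gradF (x + t • u) - gradF x‖ ≤ L * (t * ‖u‖) := by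
      have := hLip (x + t • u) x
      simpa [norm_smul, abs_of_nonneg ht.1, mul_assoc] using this
    nlinarith [norm_nonneg u, mul_le_mul_of_nonneg_right h5 (norm_nonneg u)]
  have hint : (∫ t in (0:ℝ)..1, (inner ℝ (gradF (x + t • u)) u : ℝ))
      ≤ ∫ t in (0:ℝ)..1, (inner ℝ (gradF x) u + L * t * ‖u‖ ^ 2 : ℝ) := by
    apply intervalIntegral.integral_mono_on (by norm_num)
    · exact hcont.intervalIntegrable 0 1
    · exact (Continuous.intervalIntegrable (by continuity) 0 1)
    · exact hbound
  have hval : (∫ t in (0:ℝ)..1, (inner ℝ (gradF x) u + L * t * ‖u‖ ^ 2 : ℝ))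
      = inner ℝ (gradF x) u + L / 2 * ‖u‖ ^ 2 := by
    rw [intervalIntegral.integral_add (intervalIntegrable_const)
      (Continuous.intervalIntegrable (by continuity) 0 1)]
    simp [intervalIntegral.integral_const_mul, integral_id, mul_comm, mul_assoc]
    ring
  have : F y - F x ≤ inner ℝ (gradF x) u + L / 2 * ‖u‖ ^ 2 := by
    have h0 : x + (0:ℝ) • u = x := by simp
    have h1 : x + (1:ℝ) • u = y := by simp [hu]
    rw [h0, h1] at hFTC
    linarith [hint.trans_eq hval, hFTC.ge, hFTC.le]
  linarith

end aux

lemma stmt_0_norm_sq_eq_sum {d : ℕ} (a : EuclideanSpace ℝ (Fin d)) :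
    ‖a‖ ^ 2 = ∑ i, (a i) ^ 2 := by
  rw [EuclideanSpace.norm_sq_eq]
  simp [Real.norm_eq_abs, sq_abs]

lemma stmt_0_inner_eq_sum {d : ℕ} (a b : EuclideanSpace ℝ (Fin d)) :
    (inner ℝ a b : ℝ) = ∑ i, a i * b i := by
  simp [PiLp.inner_apply, RCLike.inner_apply, mul_comm]

theorem stmt_0 {d : ℕ} (F : EuclideanSpace ℝ (Fin d) → ℝ)
    (gradF : EuclideanSpace ℝ (Fin d) → EuclideanSpace ℝ (Fin d))
    (L_F : ℝ) (hgrad : ∀ x, HasGradientAt F (gradF x) x)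
    (hLip : ∀ x y, ‖gradF x - gradF y‖ ≤ L_F * ‖x - y‖)
    (η c_l c_u : ℝ) (hη : 0 < η) (hcl : 0 < c_l) (hclu : c_l ≤ c_u)
    (ηt : EuclideanSpace ℝ (Fin d))
    (hηt : ∀ i, η * c_l ≤ ηt i ∧ ηt i ≤ η * c_u)
    (hstep : η * L_F ≤ c_l / (2 * c_u ^ 2))
    (x v : EuclideanSpace ℝ (Fin d)) :
    F (x - hadamard ηt v) ≤
      F x + η * c_u / 2 * ‖gradF x - v‖ ^ 2
        - η * c_l / 2 * ‖gradF x‖ ^ 2 - η * c_l / 4 * ‖v‖ ^ 2 := by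
  rcases Nat.eq_zero_or_pos d with hd | hd
  · subst hd
    haveI : Subsingleton (EuclideanSpace ℝ (Fin 0)) :=
      ⟨fun a b => by ext i; exact i.elim0⟩
    have hz : ∀ a : EuclideanSpace ℝ (Fin 0), ‖a‖ = 0 := fun a => by
      rw [Subsingleton.elim a 0, norm_zero]
    rw [Subsingleton.elim (x - hadamard ηt v) x, hz, hz, hz]
    simp
  · have hcu : 0 < c_u := lt_of_lt_of_le hcl hclu
    have hL : 0 ≤ L_F := by
      have h1 := hLip (EuclideanSpace.single ⟨0, hd⟩ (1:ℝ)) (0 : EuclideanSpace ℝ (Fin d))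
      have h2 : ‖(EuclideanSpace.single ⟨0, hd⟩ (1:ℝ)) - (0 : EuclideanSpace ℝ (Fin d))‖ = 1 := by
        simp [EuclideanSpace.norm_single]
      rw [h2, mul_one] at h1
      exact le_trans (norm_nonneg _) h1
    set g := gradF x with hg
    set w := hadamard ηt v with hw
    have hdes := stmt_0_descent_aux F gradF L_F hL hgrad hLip x (x - w)
    have hsub : x - w - x = -w := by abel
    rw [hsub, inner_neg_right, norm_neg] at hdes
    have hkey : ∀ i ∈ (Finset.univ : Finset (Fin d)),
        -(g i * w i) + L_F / 2 * (w i) ^ 2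
          ≤ η * c_u / 2 * (g i - v i) ^ 2 - η * c_l / 2 * (g i) ^ 2
            - η * c_l / 4 * (v i) ^ 2 := by
      intro i _
      obtain ⟨h1, h2⟩ := hηt i
      have hwi : w i = ηt i * v i := rfl
      have htpos : 0 < ηt i := lt_of_lt_of_le (by positivity) h1
      have hcu2 : (0:ℝ) < 2 * c_u ^ 2 := by positivity
      have h7 : η * L_F * (2 * c_u ^ 2) ≤ c_l := (le_div_iff₀ hcu2).mp hstep
      have hsq : ηt i ^ 2 ≤ (η * c_u) ^ 2 := by nlinarith
      have h6 : 0 ≤ L_F * ((η * c_u) ^ 2 - ηt i ^ 2) :=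
        mul_nonneg hL (by linarith)
      rw [hwi]
      nlinarith [mul_nonneg (sub_nonneg.2 h2) (sq_nonneg (g i - v i)),
        mul_nonneg (sub_nonneg.2 h1) (sq_nonneg (g i)),
        mul_nonneg (sub_nonneg.2 h1) (sq_nonneg (v i)),
        mul_nonneg h6 (sq_nonneg (v i)),
        mul_nonneg (mul_nonneg (le_of_lt hη) (sq_nonneg (v i)))
          (sub_nonneg.2 h7)]
    have hsum := Finset.sum_le_sum hkey
    have eA : ∑ i, (-(g i * w i) + L_F / 2 * (w i) ^ 2)
        = -(inner ℝ g w : ℝ) + L_F / 2 * ‖w‖ ^ 2 := by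
      rw [stmt_0_inner_eq_sum, stmt_0_norm_sq_eq_sum, Finset.sum_add_distrib,
        ← Finset.sum_neg_distrib, Finset.mul_sum]
    have eB : ∑ i, (η * c_u / 2 * (g i - v i) ^ 2 - η * c_l / 2 * (g i) ^ 2
          - η * c_l / 4 * (v i) ^ 2)
        = η * c_u / 2 * ‖g - v‖ ^ 2 - η * c_l / 2 * ‖g‖ ^ 2
          - η * c_l / 4 * ‖v‖ ^ 2 := by
      rw [stmt_0_norm_sq_eq_sum, stmt_0_norm_sq_eq_sum, stmt_0_norm_sq_eq_sum,
        Finset.sum_sub_distrib, Finset.sum_sub_distrib,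
        Finset.mul_sum, Finset.mul_sum, Finset.mul_sum]
      simp [PiLp.sub_apply]
    rw [eA, eB] at hsum
    linarith
end

section
/- Let F : ℝ^d → ℝ be differentiable with L_F-Lipschitz gradient. Then for any x, v ∈ ℝ^d and any diagonal scaling η̃ with entries in [η c_l, η c_u] where η L_F ≤ c_l/(2c_u²), the update x' = x − η̃ ∘ v satisfies F(x') ≤ F(x) + (1/2)‖√η̃ ∘ (∇F(x) − v)‖² − (1/2)‖√η̃ ∘ ∇F(x)‖² + (L_F/2)‖η̃ ∘ v‖² − (1/2)‖√η̃ ∘ v‖², where √η̃ denotes the element-wise square root. -/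
/-- Element-wise square root on `EuclideanSpace ℝ (Fin d)`. -/
noncomputable def vsqrt {d : ℕ} (a : EuclideanSpace ℝ (Fin d)) : EuclideanSpace ℝ (Fin d) :=
  WithLp.toLp 2 (fun i => Real.sqrt (a i))

open scoped RealInnerProductSpace

/-- Descent lemma: a function with Lipschitz gradient admits a quadratic upper bound. -/
theorem descent_lemma {E : Type*} [NormedAddCommGroup E] [InnerProductSpace ℝ E]
    [CompleteSpace E] (F : E → ℝ) (gradF : E → E) (L : ℝ)
    (hgrad : ∀ x, HasGradientAt F (gradF x) x)
    (hLip : ∀ x y, ‖gradF x - gradF y‖ ≤ L * ‖x - y‖) (x u : E) :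
    F (x + u) ≤ F x + ⟪gradF x, u⟫ + L / 2 * ‖u‖ ^ 2 := by
  set ψ : ℝ → ℝ := fun t => F (x + t • u) - t * ⟪gradF x, u⟫ - t ^ 2 * (L * ‖u‖ ^ 2 / 2) with hψ
  have hline : ∀ t : ℝ, HasDerivAt (fun s : ℝ => x + s • u) u t := by
    intro t
    simpa using ((hasDerivAt_id t).smul_const u).const_add x
  have hψd : ∀ t : ℝ, HasDerivAt ψ
      (⟪gradF (x + t • u), u⟫ - ⟪gradF x, u⟫ - t * (L * ‖u‖ ^ 2)) t := by
    intro t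
    have h1 : HasDerivAt (fun s : ℝ => F (x + s • u)) ⟪gradF (x + t • u), u⟫ t := by
      have := ((hgrad (x + t • u)).hasFDerivAt).comp_hasDerivAt t (hline t)
      exact this
    have h2 : HasDerivAt (fun s : ℝ => s * ⟪gradF x, u⟫) ⟪gradF x, u⟫ t := by
      simpa using (hasDerivAt_id t).mul_const ⟪gradF x, u⟫
    have h3 : HasDerivAt (fun s : ℝ => s ^ 2 * (L * ‖u‖ ^ 2 / 2)) (t * (L * ‖u‖ ^ 2)) t := by
      have := (hasDerivAt_pow 2 t).mul_const (L * ‖u‖ ^ 2 / 2)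
      simpa using this.congr_deriv (by ring)
    exact (h1.sub h2).sub h3
  have hanti : AntitoneOn ψ (Set.Icc 0 1) := by
    apply antitoneOn_of_deriv_nonpos (convex_Icc 0 1)
    · exact fun t _ => (hψd t).differentiableAt.continuousAt.continuousWithinAt
    · intro t _
      exact (hψd t).differentiableAt.differentiableWithinAt
    · intro t ht
      rw [interior_Icc] at ht
      rw [(hψd t).deriv]
      have h4 : ⟪gradF (x + t • u), u⟫ - ⟪gradF x, u⟫ ≤ t * (L * ‖u‖ ^ 2) := by
        rw [← inner_sub_left]
        calc ⟪gradF (x + t • u) - gradF x, u⟫ ≤ ‖gradF (x + t • u) - gradF x‖ * ‖u‖ :=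
              real_inner_le_norm _ _
          _ ≤ L * ‖x + t • u - x‖ * ‖u‖ := by
              have := hLip (x + t • u) x
              exact mul_le_mul_of_nonneg_right this (norm_nonneg u)
          _ = t * (L * ‖u‖ ^ 2) := by
              rw [add_sub_cancel_left, norm_smul, Real.norm_eq_abs,
                abs_of_nonneg ht.1.le]
              ring
      linarith
  have h01 : ψ 1 ≤ ψ 0 := hanti (Set.left_mem_Icc.2 zero_le_one)
    (Set.right_mem_Icc.2 zero_le_one) zero_le_one
  simp only [hψ, one_smul, zero_smul, add_zero, one_pow, one_mul, zero_mul,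
    sub_zero, zero_pow, ne_eq, OfNat.ofNat_ne_zero, not_false_eq_true] at h01
  linarith

theorem stmt_1 {d : ℕ} (F : EuclideanSpace ℝ (Fin d) → ℝ)
    (gradF : EuclideanSpace ℝ (Fin d) → EuclideanSpace ℝ (Fin d))
    (L_F : ℝ) (hgrad : ∀ x, HasGradientAt F (gradF x) x)
    (hLip : ∀ x y, ‖gradF x - gradF y‖ ≤ L_F * ‖x - y‖)
    (η c_l c_u : ℝ) (hη : 0 < η) (hcl : 0 < c_l) (hclu : c_l ≤ c_u)
    (ηt : EuclideanSpace ℝ (Fin d))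
    (hηt : ∀ i, η * c_l ≤ ηt i ∧ ηt i ≤ η * c_u)
    (hstep : η * L_F ≤ c_l / (2 * c_u ^ 2))
    (x v : EuclideanSpace ℝ (Fin d)) :
    F (x - hadamard ηt v) ≤
      F x + (1 / 2) * ‖hadamard (vsqrt ηt) (gradF x - v)‖ ^ 2
        - (1 / 2) * ‖hadamard (vsqrt ηt) (gradF x)‖ ^ 2
        + L_F / 2 * ‖hadamard ηt v‖ ^ 2
        - (1 / 2) * ‖hadamard (vsqrt ηt) v‖ ^ 2 := by
  have hηt0 : ∀ i, 0 ≤ ηt i := fun i =>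
    le_trans (by positivity) (hηt i).1
  have key := descent_lemma F gradF L_F hgrad hLip x (-(hadamard ηt v))
  rw [← sub_eq_add_neg] at key
  have hinner : ⟪gradF x, -(hadamard ηt v)⟫ =
      (1 / 2) * ‖hadamard (vsqrt ηt) (gradF x - v)‖ ^ 2
        - (1 / 2) * ‖hadamard (vsqrt ηt) (gradF x)‖ ^ 2
        - (1 / 2) * ‖hadamard (vsqrt ηt) v‖ ^ 2 := by
    rw [inner_neg_right]
    have hn : ∀ w : EuclideanSpace ℝ (Fin d), ‖w‖ ^ 2 = ∑ i, w i ^ 2 := by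
      intro w
      rw [← real_inner_self_eq_norm_sq, PiLp.inner_apply]
      simp [RCLike.inner_apply, pow_two]
    rw [hn, hn, hn, PiLp.inner_apply]
    simp only [RCLike.inner_apply, conj_trivial]
    rw [Finset.mul_sum, Finset.mul_sum, Finset.mul_sum, ← Finset.sum_sub_distrib,
      ← Finset.sum_sub_distrib, ← Finset.sum_neg_distrib]
    apply Finset.sum_congr rfl
    intro i _
    simp only [hadamard, vsqrt, PiLp.sub_apply, PiLp.toLp_apply, mul_pow, Real.sq_sqrt (hηt0 i)]
    ring
  rw [hinner] at key
  have hnorm : ‖-(hadamard ηt v)‖ = ‖hadamard ηt v‖ := norm_neg _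
  rw [hnorm] at key
  linarith
end

section
/- Let z_{t+1} = (1−β_t)z_t + β_t O_t, where O_t is a random vector with conditional mean E_t[O_t] = h(x_t) given all randomness before O_t, h : ℝ^d → ℝ^m is L-Lipschitz, and β_t ∈ (0,1]. Then E_t[‖z_{t+1} − h(x_t)‖²] ≤ (1−β_t)‖z_t − h(x_{t−1})‖² + 2β_t² E_t[‖O_t − h(x_t)‖²] + L²‖x_t − x_{t−1}‖²/β_t. -/
open MeasureTheory

set_option maxHeartbeats 1000000 in
theorem stmt_6 {d m : ℕ} {Ω : Type*} [MeasurableSpace Ω]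
    (μ : Measure Ω) [IsProbabilityMeasure μ]
    (h : EuclideanSpace ℝ (Fin d) → EuclideanSpace ℝ (Fin m))
    (L : ℝ) (hL : 0 ≤ L)
    (hLip : ∀ x y, ‖h x - h y‖ ≤ L * ‖x - y‖)
    (β : ℝ) (hβ : 0 < β) (hβ1 : β ≤ 1)
    (z : EuclideanSpace ℝ (Fin m)) (x xprev : EuclideanSpace ℝ (Fin d))
    (O : Ω → EuclideanSpace ℝ (Fin m))
    (hInt : Integrable O μ)
    (hmean : ∫ ω, O ω ∂μ = h x)
    (hInt2 : Integrable (fun ω => ‖O ω - h x‖ ^ 2) μ) :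
    ∫ ω, ‖((1 - β) • z + β • O ω) - h x‖ ^ 2 ∂μ ≤
      (1 - β) * ‖z - h xprev‖ ^ 2
        + 2 * β ^ 2 * ∫ ω, ‖O ω - h x‖ ^ 2 ∂μ
        + L ^ 2 * ‖x - xprev‖ ^ 2 / β := by
  set a : EuclideanSpace ℝ (Fin m) := z - h x with ha
  have hfInt : Integrable (fun ω => O ω - h x) μ := hInt.sub (integrable_const _)
  have hfmean : ∫ ω, (O ω - h x) ∂μ = 0 := by
    rw [integral_sub hInt (integrable_const _), hmean, integral_const]
    simp
  have h1β : (0:ℝ) ≤ 1 - β := by linarith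
  have hpt : ∀ ω, ‖((1 - β) • z + β • O ω) - h x‖ ^ 2
      = (1-β)^2 * ‖a‖^2 + (2*(1-β)*β) * (inner ℝ a (O ω - h x) : ℝ)
        + β^2 * ‖O ω - h x‖^2 := by
    intro ω
    have heq : ((1 - β) • z + β • O ω) - h x = (1-β) • a + β • (O ω - h x) := by
      rw [ha]; module
    rw [heq, @norm_add_sq_real, norm_smul, norm_smul,
      real_inner_smul_left, real_inner_smul_right,
      Real.norm_eq_abs, Real.norm_eq_abs, abs_of_nonneg h1β, abs_of_nonneg hβ.le]
    ring
  have hIntInner : Integrable (fun ω => (inner ℝ a (O ω - h x) : ℝ)) μ :=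
    hfInt.const_inner a
  have hEnn : (0:ℝ) ≤ ∫ ω, ‖O ω - h x‖ ^ 2 ∂μ :=
    integral_nonneg fun ω => sq_nonneg _
  have hintval : ∫ ω, ‖((1 - β) • z + β • O ω) - h x‖ ^ 2 ∂μ
      = (1-β)^2 * ‖a‖^2 + β^2 * ∫ ω, ‖O ω - h x‖ ^ 2 ∂μ := by
    rw [integral_congr_ae (Filter.Eventually.of_forall hpt)]
    have e1 := integral_add (μ := μ)
      (f := fun ω => (1-β)^2*‖a‖^2 + (2*(1-β)*β) * (inner ℝ a (O ω - h x) : ℝ))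
      (g := fun ω => β^2 * ‖O ω - h x‖^2)
      ((integrable_const _).add (hIntInner.const_mul _)) (hInt2.const_mul _)
    have e2 := integral_add (μ := μ)
      (f := fun _ : Ω => (1-β)^2*‖a‖^2)
      (g := fun ω => (2*(1-β)*β) * (inner ℝ a (O ω - h x) : ℝ))
      (integrable_const _) (hIntInner.const_mul _)
    rw [e1, e2, integral_const, integral_const_mul, integral_const_mul,
        integral_inner hfInt, hfmean]
    simp
  rw [hintval]
  have hna : ‖a‖ ≤ ‖z - h xprev‖ + L * ‖x - xprev‖ := by
    have hae : a = (z - h xprev) + (h xprev - h x) := by rw [ha]; abel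
    rw [hae]
    refine (norm_add_le _ _).trans ?_
    have := hLip xprev x
    rw [norm_sub_rev x xprev]
    linarith
  have key : (1-β)^2 * ‖a‖^2 ≤ (1-β) * ‖z - h xprev‖^2 + L^2 * ‖x - xprev‖^2 / β := by
    set p := ‖z - h xprev‖ with hp
    set r := L * ‖x - xprev‖ with hr
    have hp0 : 0 ≤ p := norm_nonneg _
    have hr0 : 0 ≤ r := mul_nonneg hL (norm_nonneg _)
    have ha0 : 0 ≤ ‖a‖ := norm_nonneg _
    have h2 : (1-β)^2 * ‖a‖^2 ≤ (1-β)^2 * (p + r)^2 := by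
      apply mul_le_mul_of_nonneg_left _ (sq_nonneg _)
      exact pow_le_pow_left₀ ha0 hna 2
    have h3 : L^2 * ‖x - xprev‖^2 = r^2 := by rw [hr]; ring
    rw [h3]
    refine h2.trans ?_
    have hmul : β * ((1-β)^2*(p+r)^2) ≤ β*((1-β)*p^2) + r^2 := by
      nlinarith [mul_nonneg h1β (sq_nonneg (β*p - (1-β)*r)),
        mul_nonneg (sq_nonneg r) (mul_nonneg hβ.le (by linarith : (0:ℝ) ≤ 2-β)),
        mul_nonneg hp0 hr0]
    have hc : r^2/β*β = r^2 := div_mul_cancel₀ _ hβ.ne'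
    nlinarith [hmul, hc, hβ]
  nlinarith [mul_nonneg (sq_nonneg β) hEnn]
end

section
/- Let z' = (1−β)z + β O, where O is a random vector with E[O] = h, β ∈ (0,1], and z, h, h_prev are fixed vectors. Then E[‖z' − h‖²] = (1−β)²‖z − h‖² + β² E[‖O − h‖²], and consequently using ‖z − h‖² ≤ (1 + β)‖z − h_prev‖² + (1 + 1/β)‖h − h_prev‖² one obtains E[‖z' − h‖²] ≤ (1−β)‖z − h_prev‖² + 2β² E[‖O − h‖²] + (2/β)‖h − h_prev‖². -/
set_option maxHeartbeats 1000000


open MeasureTheory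

theorem stmt_7 {m : ℕ} {Ω : Type*} [MeasurableSpace Ω]
    (μ : Measure Ω) [IsProbabilityMeasure μ]
    (β : ℝ) (hβ : 0 < β) (hβ1 : β ≤ 1)
    (z h hprev : EuclideanSpace ℝ (Fin m))
    (O : Ω → EuclideanSpace ℝ (Fin m))
    (hInt : Integrable O μ)
    (hmean : ∫ ω, O ω ∂μ = h)
    (hInt2 : Integrable (fun ω => ‖O ω - h‖ ^ 2) μ) :
    (∫ ω, ‖((1 - β) • z + β • O ω) - h‖ ^ 2 ∂μ =
        (1 - β) ^ 2 * ‖z - h‖ ^ 2 + β ^ 2 * ∫ ω, ‖O ω - h‖ ^ 2 ∂μ) ∧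
      (∫ ω, ‖((1 - β) • z + β • O ω) - h‖ ^ 2 ∂μ ≤
        (1 - β) * ‖z - hprev‖ ^ 2 + 2 * β ^ 2 * (∫ ω, ‖O ω - h‖ ^ 2 ∂μ)
          + (2 / β) * ‖h - hprev‖ ^ 2) := by
  have hrw : ∀ ω, ((1 - β) • z + β • O ω) - h
      = (1 - β) • (z - h) + β • (O ω - h) := by
    intro ω
    simp [smul_sub, sub_smul]
    abel
  set a : EuclideanSpace ℝ (Fin m) := (1 - β) • (z - h) with ha
  have hfint : Integrable (fun ω => O ω - h) μ := hInt.sub (integrable_const h)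
  have hf0 : ∫ ω, (O ω - h) ∂μ = 0 := by
    rw [integral_sub hInt (integrable_const h), hmean, integral_const]
    simp
  have hinner : Integrable (fun ω => inner ℝ a (β • (O ω - h)) : Ω → ℝ) μ :=
    (hfint.smul β).const_inner a
  have hnormsq : Integrable (fun ω => ‖β • (O ω - h)‖ ^ 2) μ := by
    have : (fun ω => ‖β • (O ω - h)‖ ^ 2) = fun ω => β ^ 2 * ‖O ω - h‖ ^ 2 := by
      funext ω
      rw [norm_smul]
      simp [mul_pow, abs_of_pos hβ]
    rw [this]
    exact hInt2.const_mul _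
  have hexp : ∀ ω, ‖((1 - β) • z + β • O ω) - h‖ ^ 2
      = ‖a‖ ^ 2 + 2 * inner ℝ a (β • (O ω - h)) + ‖β • (O ω - h)‖ ^ 2 := by
    intro ω
    rw [hrw]
    exact norm_add_sq_real a _
  have key : ∫ ω, ‖((1 - β) • z + β • O ω) - h‖ ^ 2 ∂μ
      = (1 - β) ^ 2 * ‖z - h‖ ^ 2 + β ^ 2 * ∫ ω, ‖O ω - h‖ ^ 2 ∂μ := by
    calc ∫ ω, ‖((1 - β) • z + β • O ω) - h‖ ^ 2 ∂μ
        = ∫ ω, (‖a‖ ^ 2 + 2 * inner ℝ a (β • (O ω - h)) + ‖β • (O ω - h)‖ ^ 2) ∂μ := by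
          exact integral_congr_ae (Filter.Eventually.of_forall hexp)
      _ = (∫ _, ‖a‖ ^ 2 ∂μ) + (∫ ω, 2 * inner ℝ a (β • (O ω - h)) ∂μ)
            + ∫ ω, ‖β • (O ω - h)‖ ^ 2 ∂μ := by
          have hint1 : Integrable
              (fun ω => ‖a‖ ^ 2 + 2 * inner ℝ a (β • (O ω - h)) : Ω → ℝ) μ := by
            exact (integrable_const _).add (hinner.const_mul 2)
          have hint0 : Integrable (fun _ : Ω => ‖a‖ ^ 2) μ := integrable_const _
          have hint2 : Integrable (fun ω => 2 * inner ℝ a (β • (O ω - h)) : Ω → ℝ) μ := by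
            exact hinner.const_mul 2
          rw [integral_add hint1 hnormsq, integral_add hint0 hint2]
      _ = (1 - β) ^ 2 * ‖z - h‖ ^ 2 + β ^ 2 * ∫ ω, ‖O ω - h‖ ^ 2 ∂μ := by
          have h1 : ∫ _, ‖a‖ ^ 2 ∂μ = (1 - β) ^ 2 * ‖z - h‖ ^ 2 := by
            rw [integral_const]
            simp [ha, norm_smul, mul_pow, sq_abs]
          have h2 : (∫ ω, 2 * inner ℝ a (β • (O ω - h)) ∂μ : ℝ) = 0 := by
            rw [integral_const_mul]
            have hii : (∫ ω, (inner ℝ a (β • (O ω - h)) : ℝ) ∂μ)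
                = inner ℝ a (∫ ω, β • (O ω - h) ∂μ) := by
              exact integral_inner (by exact hfint.smul β) a
            rw [hii, integral_smul, hf0]
            simp
          have h3 : ∫ ω, ‖β • (O ω - h)‖ ^ 2 ∂μ = β ^ 2 * ∫ ω, ‖O ω - h‖ ^ 2 ∂μ := by
            rw [← integral_const_mul]
            congr 1
            funext ω
            rw [norm_smul]
            simp [mul_pow, abs_of_pos hβ]
          rw [h1, h2, h3]
          ring
  refine ⟨key, ?_⟩
  rw [key]
  have hI0 : 0 ≤ ∫ ω, ‖O ω - h‖ ^ 2 ∂μ :=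
    integral_nonneg fun ω => sq_nonneg _
  have hyoung : ‖z - h‖ ^ 2 ≤ (1 + β) * ‖z - hprev‖ ^ 2 + (1 + 1/β) * ‖h - hprev‖ ^ 2 := by
    have htri : ‖z - h‖ ≤ ‖z - hprev‖ + ‖h - hprev‖ := by
      calc ‖z - h‖ = ‖(z - hprev) - (h - hprev)‖ := by abel_nf
        _ ≤ ‖z - hprev‖ + ‖h - hprev‖ := norm_sub_le _ _
    have h1 : (0:ℝ) ≤ ‖z - hprev‖ := norm_nonneg _
    have h2 : (0:ℝ) ≤ ‖h - hprev‖ := norm_nonneg _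
    have h3 : (0:ℝ) ≤ ‖z - h‖ := norm_nonneg _
    have hsq : ‖z - h‖ ^ 2 ≤ (‖z - hprev‖ + ‖h - hprev‖) ^ 2 := by nlinarith
    have hβne : β ≠ 0 := ne_of_gt hβ
    have key2 : (0:ℝ) ≤ (β * ‖z - hprev‖ - ‖h - hprev‖) ^ 2 / β := by positivity
    have expand : (β * ‖z - hprev‖ - ‖h - hprev‖) ^ 2 / β
        = β * ‖z - hprev‖ ^ 2 - 2 * ‖z - hprev‖ * ‖h - hprev‖
          + (1/β) * ‖h - hprev‖ ^ 2 := by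
      field_simp
      ring
    nlinarith [key2, expand]
  have hc1 : (1 - β) ^ 2 * ((1 + β) * ‖z - hprev‖ ^ 2) ≤ (1 - β) * ‖z - hprev‖ ^ 2 := by
    have h4 : (1 - β) ^ 2 * (1 + β) ≤ 1 - β := by
      nlinarith [mul_nonneg (sq_nonneg β) (sub_nonneg.2 hβ1)]
    calc (1 - β) ^ 2 * ((1 + β) * ‖z - hprev‖ ^ 2)
        = ((1 - β) ^ 2 * (1 + β)) * ‖z - hprev‖ ^ 2 := by ring
      _ ≤ (1 - β) * ‖z - hprev‖ ^ 2 := mul_le_mul_of_nonneg_right h4 (sq_nonneg _)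
  have hc2 : (1 - β) ^ 2 * ((1 + 1/β) * ‖h - hprev‖ ^ 2) ≤ (2 / β) * ‖h - hprev‖ ^ 2 := by
    have hn := sq_nonneg (‖h - hprev‖)
    have h1b : (1 : ℝ) ≤ 1 / β := by
      rw [le_div_iff₀ hβ]; linarith
    have h2b : 1 + 1/β ≤ 2 / β := by
      have hge : (0:ℝ) ≤ (1 - β)/β := div_nonneg (by linarith) hβ.le
      have heq : 2/β - (1 + 1/β) = (1 - β)/β := by field_simp; ring
      linarith
    have hsq1 : (1 - β) ^ 2 ≤ 1 := by nlinarith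
    have hpos : (0:ℝ) ≤ 1 + 1/β := by positivity
    calc (1 - β) ^ 2 * ((1 + 1/β) * ‖h - hprev‖ ^ 2)
        ≤ 1 * ((1 + 1/β) * ‖h - hprev‖ ^ 2) := by
          apply mul_le_mul_of_nonneg_right hsq1 (by positivity)
      _ = (1 + 1/β) * ‖h - hprev‖ ^ 2 := by ring
      _ ≤ (2/β) * ‖h - hprev‖ ^ 2 := mul_le_mul_of_nonneg_right h2b hn
  have hmono : (1 - β) ^ 2 * ‖z - h‖ ^ 2
      ≤ (1 - β) ^ 2 * ((1 + β) * ‖z - hprev‖ ^ 2 + (1 + 1/β) * ‖h - hprev‖ ^ 2) :=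
    mul_le_mul_of_nonneg_left hyoung (sq_nonneg _)
  have hc3 : β ^ 2 * ∫ ω, ‖O ω - h‖ ^ 2 ∂μ ≤ 2 * β ^ 2 * ∫ ω, ‖O ω - h‖ ^ 2 ∂μ := by
    nlinarith [sq_nonneg β]
  linarith [hmono, hc1, hc2, hc3]
end

section
/- Let F be L_F-smooth with F ≥ F_*, and suppose for each t: F(x_{t+1}) ≤ F(x_t) + (η c_u/2)Δ_t' − (η c_l/2)g_t − (η c_l/4)m_t and Δ'_{t+1} ≤ (1−β)Δ'_t + 2β²σ²(1 + c·g_{t+1}) + L_F²η²c_u² m_t/β, where Δ'_t, g_t, m_t ≥ 0 (denoting ‖v_{t+1}−∇F(x_t)‖², ‖∇F(x_t)‖², ‖v_{t+1}‖² after taking expectations), with g_{t+1} ≤ 2g_t + 2L_F²η²c_u² m_t. If η ≤ β√(c_l)/(2L_F√(c_u³)), 2βσ²c ≤ c_l/(4c_u), and 2βσ²cL_F²η²c_u³ ≤ c_l/8, then (1/(T+1))∑_{t=0}^T g_t ≤ 2Δ'_0 c_u/(βTc_l) + 4(F(x_0) − F_*)/(ηc_l T) + 4βσ²c_u/c_l.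 -/
open scoped BigOperators

set_option maxHeartbeats 2000000 in
theorem stmt_17 (L_F σsq c c_l c_u η β Fstar : ℝ) (Fx Δ' g m : ℕ → ℝ)
    (hL : 0 < L_F) (hσ : 0 < σsq) (hc : 0 < c) (hcl : 0 < c_l) (hclu : c_l ≤ c_u)
    (hη : 0 < η) (hη1 : η ≤ 1) (hβ : 0 < β) (hβ1 : β ≤ 1)
    (hFstar : ∀ t, Fstar ≤ Fx t)
    (hΔ' : ∀ t, 0 ≤ Δ' t) (hg : ∀ t, 0 ≤ g t) (hm : ∀ t, 0 ≤ m t)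
    (hdesc : ∀ t, Fx (t + 1) ≤ Fx t + η * c_u / 2 * Δ' t
        - η * c_l / 2 * g t - η * c_l / 4 * m t)
    (hrec : ∀ t, Δ' (t + 1) ≤ (1 - β) * Δ' t
        + 2 * β ^ 2 * σsq * (1 + c * g (t + 1)) + L_F ^ 2 * η ^ 2 * c_u ^ 2 * m t / β)
    (hgrow : ∀ t, g (t + 1) ≤ 2 * g t + 2 * L_F ^ 2 * η ^ 2 * c_u ^ 2 * m t)
    (hη2 : η ≤ β * Real.sqrt c_l / (2 * L_F * Real.sqrt (c_u ^ 3)))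
    (hβ2 : 2 * β * σsq * c ≤ c_l / (4 * c_u))
    (hβ3 : 2 * β * σsq * c * L_F ^ 2 * η ^ 2 * c_u ^ 3 ≤ c_l / 8)
    (T : ℕ) (hT : 1 ≤ T) :
    (1 / ((T : ℝ) + 1)) * ∑ t ∈ Finset.range (T + 1), g t ≤
      2 * Δ' 0 * c_u / (β * T * c_l) + 4 * (Fx 0 - Fstar) / (η * c_l * T)
        + 4 * β * σsq * c_u / c_l := by
  have hcu : 0 < c_u := lt_of_lt_of_le hcl hclu
  -- from hη2 : 4 L² c_u³ η² ≤ β² c_l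
  have hsq : 4 * L_F ^ 2 * c_u ^ 3 * η ^ 2 ≤ β ^ 2 * c_l := by
    have hupos : 0 < Real.sqrt (c_u ^ 3) := Real.sqrt_pos.mpr (by positivity)
    have hs2 : Real.sqrt c_l ^ 2 = c_l := Real.sq_sqrt hcl.le
    have hu2 : Real.sqrt (c_u ^ 3) ^ 2 = c_u ^ 3 := Real.sq_sqrt (by positivity)
    have h1 : η * (2 * L_F * Real.sqrt (c_u ^ 3)) ≤ β * Real.sqrt c_l :=
      (le_div_iff₀ (by positivity)).mp hη2
    have h2 : (η * (2 * L_F * Real.sqrt (c_u ^ 3))) ^ 2 ≤ (β * Real.sqrt c_l) ^ 2 :=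
      pow_le_pow_left₀ (by positivity) h1 2
    rw [mul_pow η, mul_pow β, hs2, mul_pow, hu2] at h2
    nlinarith [h2]
  -- per-step Lyapunov descent
  have step : ∀ t, 2 * β ^ 2 * Fx (t + 1) + β * η * c_u * Δ' (t + 1) ≤
      2 * β ^ 2 * Fx t + β * η * c_u * Δ' t - β ^ 2 * η * c_l / 2 * g t
        + 2 * β ^ 3 * η * c_u * σsq := by
    intro t
    have hr' : β * Δ' (t + 1) ≤ β * ((1 - β) * Δ' t + 2 * β ^ 2 * σsq * (1 + c * g (t + 1)))
        + L_F ^ 2 * η ^ 2 * c_u ^ 2 * m t := by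
      have h := mul_le_mul_of_nonneg_left (hrec t) hβ.le
      have e : β * ((1 - β) * Δ' t + 2 * β ^ 2 * σsq * (1 + c * g (t + 1))
          + L_F ^ 2 * η ^ 2 * c_u ^ 2 * m t / β)
          = β * ((1 - β) * Δ' t + 2 * β ^ 2 * σsq * (1 + c * g (t + 1)))
            + L_F ^ 2 * η ^ 2 * c_u ^ 2 * m t := by
        field_simp
      linarith [e ▸ h]
    have h1 := mul_le_mul_of_nonneg_left (hdesc t) (show (0:ℝ) ≤ 2 * β ^ 2 by positivity)
    have h2 := mul_le_mul_of_nonneg_left hr' (show (0:ℝ) ≤ η * c_u by positivity)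
    have h3 := mul_le_mul_of_nonneg_left (hgrow t)
      (show (0:ℝ) ≤ 2 * β ^ 3 * η * c_u * σsq * c by positivity)
    have h4 := mul_le_mul_of_nonneg_right hβ2
      (mul_nonneg (show (0:ℝ) ≤ 2 * β ^ 2 * η * c_u by positivity) (hg t))
    have e4 : c_l / (4 * c_u) * (2 * β ^ 2 * η * c_u * g t) = β ^ 2 * η * c_l * g t / 2 := by
      field_simp; ring
    rw [e4] at h4
    have h5 := mul_le_mul_of_nonneg_right hβ3
      (mul_nonneg (show (0:ℝ) ≤ 2 * β ^ 2 * η by positivity) (hm t))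
    have h6 := mul_le_mul_of_nonneg_right hsq
      (mul_nonneg (by positivity : (0:ℝ) ≤ η / 4) (hm t))
    nlinarith [h1, h2, h3, h4, h5, h6]
  -- telescoping sum
  have sum_step : ∀ n : ℕ, β ^ 2 * η * c_l / 2 * ∑ t ∈ Finset.range n, g t ≤
      (2 * β ^ 2 * Fx 0 + β * η * c_u * Δ' 0)
        - (2 * β ^ 2 * Fx n + β * η * c_u * Δ' n) + n * (2 * β ^ 3 * η * c_u * σsq) := by
    intro n
    induction n with
    | zero => simp
    | succ k ih =>
      rw [Finset.sum_range_succ]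
      push_cast
      linarith [step k, ih]
  have P := sum_step (T + 1)
  have hTpos : (0:ℝ) < T := by exact_mod_cast hT
  have hFd : 0 ≤ Fx 0 - Fstar := by linarith [hFstar 0]
  have hPhi : 2 * β ^ 2 * Fstar ≤ 2 * β ^ 2 * Fx (T + 1) + β * η * c_u * Δ' (T + 1) := by
    have a := mul_le_mul_of_nonneg_left (hFstar (T + 1)) (show (0:ℝ) ≤ 2 * β ^ 2 by positivity)
    have b := mul_nonneg (show (0:ℝ) ≤ β * η * c_u by positivity) (hΔ' (T + 1))
    linarith
  set S := ∑ t ∈ Finset.range (T + 1), g t with hS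
  have P2 : β ^ 2 * η * c_l / 2 * S ≤ 2 * β ^ 2 * (Fx 0 - Fstar) + β * η * c_u * Δ' 0
      + ((T:ℝ) + 1) * (2 * β ^ 3 * η * c_u * σsq) := by
    push_cast at P
    linarith
  rw [one_div, inv_mul_le_iff₀ (by positivity)]
  -- multiply target by K := β² η c_l T / 2 and compare
  rw [← mul_le_mul_iff_of_pos_right (show (0:ℝ) < β ^ 2 * η * c_l * T / 2 by positivity)]
  have eR : ((T:ℝ) + 1) * (2 * Δ' 0 * c_u / (β * T * c_l) + 4 * (Fx 0 - Fstar) / (η * c_l * T)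
        + 4 * β * σsq * c_u / c_l) * (β ^ 2 * η * c_l * T / 2)
      = ((T:ℝ) + 1) * (Δ' 0 * c_u * β * η + 2 * β ^ 2 * (Fx 0 - Fstar)
        + 2 * β ^ 3 * σsq * c_u * η * T) := by
    have hβ0 : β ≠ 0 := hβ.ne'
    have hT0 : (T:ℝ) ≠ 0 := hTpos.ne'
    have hcl0 : c_l ≠ 0 := hcl.ne'
    have hη0 : η ≠ 0 := hη.ne'
    field_simp
    ring
  rw [eR]
  have PT := mul_le_mul_of_nonneg_left P2 hTpos.le
  have n1 : 0 ≤ β * η * c_u * Δ' 0 := mul_nonneg (by positivity) (hΔ' 0)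
  have n2 : 0 ≤ 2 * β ^ 2 * (Fx 0 - Fstar) := mul_nonneg (by positivity) hFd
  linarith [PT, n1, n2]
end
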